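/- arXiv:2512.09526 — 3 statements merged into one kernel-verified Lean document; each statement's English description precedes it below -/
import Mathlib

section
/- Let f = Σ_{i=0}^d f_i X^{q^i} ∈ F[X] be a nonzero q-linearized polynomial. Then for every nonzero x ∈ F̄ one has ν(f(x)) ≥ V_f(ν(x)). Moreover, if in addition ν(x) ≠ ν(β) for every nonzero root β of f in F̄, then ν(f(x)) = V_f(ν(x)). -/
/-!
Write `|y| = exp (-ν y)`, a nonarchimedean absolute value on `F̄`. Then `exp (-V_f z)` is
the Gauss norm `max |fᵢ| rⁱ` of `f` at radius `r = exp (-z)`, so the inequality is the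
ultrametric inequality for `f(x) = Σ fᵢ xⁱ`. For the equality, split `f = c ∏ (X - β)` over
`F̄`: the Gauss norm is multiplicative, that of `X - β` at radius `|x|` is `max |β| |x|`, and
this is `|x - β|` as soon as `|x| ≠ |β|`.
-/

open Polynomial

/-- A polynomial is `q`-linearized if it is of the form `Σ fᵢ X^(qⁱ)`. -/
def IsqLin {F : Type*} [Field F] (q : ℕ) (f : Polynomial F) : Prop :=
  ∀ n, f.coeff n ≠ 0 → ∃ i : ℕ, n = q ^ i

/-- The valuation polygon `V_f(z) = min { ν(fᵢ) + qⁱ z : fᵢ ≠ 0 }` of a nonzero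
`q`-linearized polynomial. -/
noncomputable def Vpoly {F : Type*} [Field F] (q : ℕ) (ν : F → ℚ) (f : Polynomial F)
    (z : ℝ) : ℝ :=
  sInf {y : ℝ | ∃ i : ℕ, f.coeff (q ^ i) ≠ 0 ∧
    y = (ν (f.coeff (q ^ i)) : ℝ) + (q : ℝ) ^ i * z}

namespace Polynomial

variable {K : Type*} [Field K] {v : AbsoluteValue K ℝ}

theorem gaussNorm_X_sub_C {c : ℝ} (hc : 0 ≤ c) (β : K) :
    (X - C β).gaussNorm v c = max (v β) c := by
  refine le_antisymm ?_ (max_le ?_ ?_)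
  · obtain ⟨i, hi⟩ := (X - C β).exists_eq_gaussNorm v c
    rw [hi]
    rcases i with _ | _ | i
    · simp
    · simp
    · simp [coeff_X]
  · have h0 := (X - C β).le_gaussNorm v hc 0
    rwa [coeff_sub, coeff_X_zero, coeff_C_zero, zero_sub, v.map_neg, pow_zero, mul_one] at h0
  · have h1 := (X - C β).le_gaussNorm v hc 1
    rwa [coeff_sub, coeff_X_one, coeff_C_succ, sub_zero, v.map_one, pow_one, one_mul] at h1

theorem apply_eval_le_gaussNorm (hna : IsNonarchimedean v) (g : K[X]) (x : K) :
    v (g.eval x) ≤ g.gaussNorm v (v x) := by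
  rcases g.support.eq_empty_or_nonempty with h | h
  · simp [support_eq_empty.mp h]
  · rw [eval_eq_sum, Polynomial.sum, gaussNorm, dif_pos h]
    simpa only [map_mul, map_pow] using
      hna.apply_sum_le_sup (l := fun n => g.coeff n * x ^ n) h

theorem gaussNorm_multiset_prod (hna : IsNonarchimedean v) {c : ℝ} (hc : 0 < c)
    (m : Multiset K[X]) : m.prod.gaussNorm v c = (m.map (gaussNorm v c)).prod := by
  induction m using Multiset.induction with
  | empty => simp [← C_1, -map_one]
  | cons p m ih =>
    rw [Multiset.prod_cons, gaussNorm_mul hna hc, ih, Multiset.map_cons, Multiset.prod_cons]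

theorem Splits.gaussNorm_eq_prod_roots (hna : IsNonarchimedean v) {c : ℝ} (hc : 0 < c)
    {g : K[X]} (hg : g.Splits) :
    g.gaussNorm v c = v g.leadingCoeff * (g.roots.map fun β => max (v β) c).prod := by
  conv_lhs => rw [hg.eq_prod_roots]
  rw [gaussNorm_mul hna hc, gaussNorm_C, gaussNorm_multiset_prod hna hc, Multiset.map_map]
  simp only [Function.comp_def, gaussNorm_X_sub_C hc.le]

theorem Splits.apply_eval_eq_gaussNorm (hna : IsNonarchimedean v) {g : K[X]} (hg : g.Splits)
    {x : K} (hx : x ≠ 0) (hroots : ∀ β ∈ g.roots, β ≠ 0 → v x ≠ v β) :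
    v (g.eval x) = g.gaussNorm v (v x) := by
  rw [hg.gaussNorm_eq_prod_roots hna (v.pos hx), hg.eval_eq_prod_roots, map_mul,
    map_multiset_prod, Multiset.map_map]
  congr 2
  refine Multiset.map_congr rfl fun β hβ => ?_
  by_cases hβ0 : β = 0
  · simp [hβ0]
  · rw [Function.comp_apply, sub_eq_add_neg,
      hna.add_eq_max_of_ne (by simpa using hroots β hβ hβ0), v.map_neg, max_comm]

end Polynomial

section ExpNegVal

variable {K : Type*} [Field K] {ν : K → ℚ}

open Classical in
noncomputable def expNegVal (ν : K → ℚ) (x : K) : ℝ :=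
  if x = 0 then 0 else Real.exp (-ν x)

theorem expNegVal_of_ne_zero {x : K} (hx : x ≠ 0) : expNegVal ν x = Real.exp (-ν x) :=
  if_neg hx

@[simp]
theorem expNegVal_zero : expNegVal ν 0 = 0 :=
  if_pos rfl

theorem expNegVal_nonneg (x : K) : 0 ≤ expNegVal ν x := by
  unfold expNegVal
  split_ifs <;> positivity

theorem expNegVal_mul (hmul : ∀ x y : K, x ≠ 0 → y ≠ 0 → ν (x * y) = ν x + ν y)
    (x y : K) :
    expNegVal ν (x * y) = expNegVal ν x * expNegVal ν y := by
  by_cases hx : x = 0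
  · simp [hx]
  by_cases hy : y = 0
  · simp [hy]
  rw [expNegVal_of_ne_zero (mul_ne_zero hx hy), expNegVal_of_ne_zero hx,
    expNegVal_of_ne_zero hy, hmul x y hx hy, ← Real.exp_add]
  push_cast
  ring_nf

theorem isNonarchimedean_expNegVal
    (hadd : ∀ x y : K, x ≠ 0 → y ≠ 0 → x + y ≠ 0 → min (ν x) (ν y) ≤ ν (x + y)) :
    IsNonarchimedean (expNegVal ν) := by
  intro x y
  by_cases hx : x = 0
  · simp [hx]
  by_cases hy : y = 0
  · simp [hy]
  by_cases hxy : x + y = 0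
  · rw [hxy, expNegVal_zero]
    exact le_max_of_le_left (expNegVal_nonneg x)
  rw [expNegVal_of_ne_zero hxy, expNegVal_of_ne_zero hx, expNegVal_of_ne_zero hy]
  rcases min_le_iff.mp (hadd x y hx hy hxy) with h | h
  · exact le_max_of_le_left (Real.exp_le_exp.mpr (neg_le_neg (by exact_mod_cast h)))
  · exact le_max_of_le_right (Real.exp_le_exp.mpr (neg_le_neg (by exact_mod_cast h)))

noncomputable def expNegAbv (hmul : ∀ x y : K, x ≠ 0 → y ≠ 0 → ν (x * y) = ν x + ν y)
    (hadd : ∀ x y : K, x ≠ 0 → y ≠ 0 → x + y ≠ 0 → min (ν x) (ν y) ≤ ν (x + y)) :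
    AbsoluteValue K ℝ where
  toFun := expNegVal ν
  map_mul' := expNegVal_mul hmul
  nonneg' := expNegVal_nonneg
  eq_zero' x := by
    unfold expNegVal
    split_ifs with hx <;> simp [hx, Real.exp_ne_zero]
  add_le' x y := (isNonarchimedean_expNegVal hadd x y).trans
    (max_le_add_of_nonneg (expNegVal_nonneg x) (expNegVal_nonneg y))

variable (hmul : ∀ x y : K, x ≠ 0 → y ≠ 0 → ν (x * y) = ν x + ν y)
  (hadd : ∀ x y : K, x ≠ 0 → y ≠ 0 → x + y ≠ 0 → min (ν x) (ν y) ≤ ν (x + y))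

theorem coe_expNegAbv : expNegAbv hmul hadd = expNegVal ν := rfl

theorem isNonarchimedean_expNegAbv : IsNonarchimedean (expNegAbv hmul hadd) :=
  isNonarchimedean_expNegVal hadd

theorem neg_log_expNegVal {x : K} (hx : x ≠ 0) : -Real.log (expNegVal ν x) = ν x := by
  rw [expNegVal_of_ne_zero hx, Real.log_exp, neg_neg]

theorem isLeast_neg_log_gaussNorm {g : K[X]} (hg : g ≠ 0) (z : ℝ) :
    IsLeast {y : ℝ | ∃ n, g.coeff n ≠ 0 ∧ y = ν (g.coeff n) + n * z}
      (-Real.log (g.gaussNorm (expNegAbv hmul hadd) (Real.exp (-z)))) := by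
  set G := g.gaussNorm (expNegAbv hmul hadd) (Real.exp (-z))
  have hterm : ∀ n, g.coeff n ≠ 0 →
      expNegAbv hmul hadd (g.coeff n) * Real.exp (-z) ^ n =
        Real.exp (-(ν (g.coeff n) + n * z)) :=
    fun n hn => by
      rw [coe_expNegAbv, expNegVal_of_ne_zero hn, ← Real.exp_nat_mul, ← Real.exp_add]
      ring_nf
  have hle : ∀ n, g.coeff n ≠ 0 → Real.exp (-(ν (g.coeff n) + n * z)) ≤ G := fun n hn =>
    hterm n hn ▸ g.le_gaussNorm _ (Real.exp_pos _).le n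
  obtain ⟨n₀, hn₀⟩ : ∃ n, g.coeff n ≠ 0 := by simpa [Polynomial.ext_iff] using hg
  have hG : 0 < G := (Real.exp_pos _).trans_le (hle n₀ hn₀)
  refine ⟨?_, ?_⟩
  · obtain ⟨i, hi⟩ : ∃ i, G = expNegAbv hmul hadd (g.coeff i) * Real.exp (-z) ^ i :=
      g.exists_eq_gaussNorm _ _
    have hcoeff : g.coeff i ≠ 0 := by
      rintro h
      rw [h, map_zero, zero_mul] at hi
      exact hG.ne' hi
    exact ⟨i, hcoeff, by rw [hi, hterm i hcoeff, Real.log_exp, neg_neg]⟩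
  · rintro y ⟨n, hn, rfl⟩
    rw [neg_le, ← Real.log_exp (-_)]
    exact Real.log_le_log (Real.exp_pos _) (hle n hn)

theorem vpoly_eq_neg_log_gaussNorm {F : Type*} [Field F] (φ : F →+* K) {q : ℕ} {f : F[X]}
    (hf : IsqLin q f) (hf0 : f ≠ 0) (z : ℝ) :
    Vpoly q (fun t => ν (φ t)) f z =
      -Real.log ((f.map φ).gaussNorm (expNegAbv hmul hadd) (Real.exp (-z))) := by
  rw [← (isLeast_neg_log_gaussNorm hmul hadd ((Polynomial.map_ne_zero_iff φ.injective).mpr hf0)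
    z).csInf_eq, Vpoly]
  congr 1
  ext y
  simp only [Set.mem_ofPred_eq, coeff_map, ne_eq, map_eq_zero]
  constructor
  · rintro ⟨i, hi, rfl⟩
    exact ⟨q ^ i, hi, by push_cast; rfl⟩
  · rintro ⟨n, hn, rfl⟩
    obtain ⟨i, rfl⟩ := hf n hn
    exact ⟨i, hn, by push_cast; rfl⟩

end ExpNegVal

theorem stmt6_general {F : Type*} [Field F]
    (q : ℕ)
    (ν : AlgebraicClosure F → ℚ)
    (hmul : ∀ x y : AlgebraicClosure F, x ≠ 0 → y ≠ 0 → ν (x * y) = ν x + ν y)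
    (hadd : ∀ x y : AlgebraicClosure F, x ≠ 0 → y ≠ 0 → x + y ≠ 0 →
      min (ν x) (ν y) ≤ ν (x + y))
    (f : Polynomial F) (hf : IsqLin q f) (hf0 : f ≠ 0) :
    (∀ x : AlgebraicClosure F, x ≠ 0 →
      Polynomial.aeval x f = 0 ∨
        Vpoly q (fun t => ν (algebraMap F (AlgebraicClosure F) t)) f (ν x) ≤
          (ν (Polynomial.aeval x f) : ℝ)) ∧
    (∀ x : AlgebraicClosure F, x ≠ 0 →
      (∀ β : AlgebraicClosure F, Polynomial.aeval β f = 0 → β ≠ 0 → ν x ≠ ν β) →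
      Polynomial.aeval x f ≠ 0 ∧
        (ν (Polynomial.aeval x f) : ℝ) =
          Vpoly q (fun t => ν (algebraMap F (AlgebraicClosure F) t)) f (ν x)) := by
  set v := expNegAbv hmul hadd
  have hna : IsNonarchimedean v := isNonarchimedean_expNegAbv hmul hadd
  set g := f.map (algebraMap F (AlgebraicClosure F))
  have hg : g ≠ 0 := (Polynomial.map_ne_zero_iff (algebraMap F _).injective).mpr hf0
  have haeval : ∀ x, aeval x f = g.eval x := fun x => by rw [aeval_def, eval_map]
  have hV : ∀ x ≠ 0, Vpoly q (fun t => ν (algebraMap F _ t)) f (ν x) =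
      -Real.log (g.gaussNorm v (v x)) := fun x hx => by
    rw [vpoly_eq_neg_log_gaussNorm hmul hadd _ hf hf0, coe_expNegAbv, expNegVal_of_ne_zero hx]
  refine ⟨fun x hx => or_iff_not_imp_left.mpr fun hfx => ?_, fun x hx hroots => ?_⟩
  · rw [hV x hx, ← neg_log_expNegVal hfx, neg_le_neg_iff, ← coe_expNegAbv hmul hadd]
    exact Real.log_le_log (v.pos hfx) (haeval x ▸ apply_eval_le_gaussNorm hna g x)
  · have hroots' : ∀ β ∈ g.roots, β ≠ 0 → v x ≠ v β := fun β hβ hβ0 => by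
      rw [coe_expNegAbv, expNegVal_of_ne_zero hx, expNegVal_of_ne_zero hβ0]
      simpa using hroots β (by rw [haeval]; exact isRoot_of_mem_roots hβ) hβ0
    have heq : v (aeval x f) = g.gaussNorm v (v x) :=
      haeval x ▸ (IsAlgClosed.splits g).apply_eval_eq_gaussNorm hna hx hroots'
    have hfx : aeval x f ≠ 0 := by
      rwa [← v.ne_zero_iff, heq, ne_eq,
        gaussNorm_eq_zero_iff _ _ (fun _ => v.eq_zero.mp) (v.pos hx)]
    refine ⟨hfx, ?_⟩
    rw [hV x hx, ← heq, coe_expNegAbv, neg_log_expNegVal hfx]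

theorem stmt6 {Fq F : Type*} [Field Fq] [Fintype Fq] [Field F] [Algebra Fq F]
    (q : ℕ) (hq : q = Fintype.card Fq)
    (ν : AlgebraicClosure F → ℚ)
    (hmul : ∀ x y : AlgebraicClosure F, x ≠ 0 → y ≠ 0 → ν (x * y) = ν x + ν y)
    (hadd : ∀ x y : AlgebraicClosure F, x ≠ 0 → y ≠ 0 → x + y ≠ 0 →
      min (ν x) (ν y) ≤ ν (x + y))
    (f : Polynomial F) (hf : IsqLin q f) (hf0 : f ≠ 0) :
    (∀ x : AlgebraicClosure F, x ≠ 0 →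
      Polynomial.aeval x f = 0 ∨
        Vpoly q (fun t => ν (algebraMap F (AlgebraicClosure F) t)) f (ν x) ≤
          (ν (Polynomial.aeval x f) : ℝ)) ∧
    (∀ x : AlgebraicClosure F, x ≠ 0 →
      (∀ β : AlgebraicClosure F, Polynomial.aeval β f = 0 → β ≠ 0 → ν x ≠ ν β) →
      Polynomial.aeval x f ≠ 0 ∧
        (ν (Polynomial.aeval x f) : ℝ) =
          Vpoly q (fun t => ν (algebraMap F (AlgebraicClosure F) t)) f (ν x)) :=
  stmt6_general q ν hmul hadd f hf hf0
end

section
/- Let f = Σ_{i=0}^d f_i X^{q^i} ∈ F[X] be a q-linearized polynomial with f₀ ≠ 0, f_d ≠ 0 and d ≥ 1 (so f is separable of degree q^d). Then f has a nonzero root in F̄, and the maximum of ν(β) over all nonzero roots β of f in F̄ equals −min{(ν(f_i) − ν(f₀))/(q^i − 1) : 1 ≤ i ≤ d, f_i ≠ 0}. -/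
/-!
If `β ≠ 0` is a root, the ultrametric inequality applied to `0 = Σ fᵢ β^(qⁱ)` shows that some
term with `i ≥ 1` has valuation at most that of `f₀ β`, i.e. `ν β ≤ -(ν fᵢ - ν f₀) / (qⁱ - 1)`.
Conversely, let `β₀` be a root of `f / X` of maximal valuation. By Vieta, `f₀` and `fᵢ` are, up to
sign and the leading coefficient, the product of all roots of `f / X` and an elementary symmetric
function of them each of whose monomials omits exactly `qⁱ - 1` roots; hence
`ν f₀ ≤ ν fᵢ + (qⁱ - 1) ν β₀` for every `i`. Applied to `β₀`, the first bound holds for some `i`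
and the second for all `i`, so `-ν β₀` is the least of the quotients `(ν fᵢ - ν f₀) / (qⁱ - 1)`.
-/

open Polynomial

namespace AddValuation

variable {R Γ₀ : Type*} [LinearOrderedAddCommMonoidWithTop Γ₀]

section CommRing

variable [CommRing R] (v : AddValuation R Γ₀)

theorem map_multiset_prod (s : Multiset R) : v s.prod = (s.map v).sum :=
  Multiset.induction_on s (by simp) fun a s ih => by simp [ih]

theorem le_map_multiset_sum {s : Multiset R} {g : Γ₀} (h : ∀ x ∈ s, g ≤ v x) : g ≤ v s.sum := by
  induction s using Multiset.induction_on with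
  | empty => simp
  | cons a s ih =>
    rw [Multiset.sum_cons]
    exact v.map_le_add (h a (Multiset.mem_cons_self a s))
      (ih fun x hx => h x (Multiset.mem_cons_of_mem hx))

theorem map_multiset_prod_le_card_nsmul {s : Multiset R} {x : R} (h : ∀ y ∈ s, v y ≤ v x) :
    v s.prod ≤ Multiset.card s • v x := by
  rw [map_multiset_prod, ← Multiset.card_map v]
  exact Multiset.sum_le_card_nsmul _ _ (Multiset.forall_mem_map_iff.mpr h)

end CommRing

theorem exists_ne_map_le_of_sum_eq_zero {K : Type*} [DivisionRing K] [Nontrivial Γ₀]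
    (v : AddValuation K Γ₀) {ι : Type*} [DecidableEq ι] {s : Finset ι} {a : ι → K}
    (hs : ∑ i ∈ s, a i = 0) {j : ι} (hj : j ∈ s) (haj : a j ≠ 0) :
    ∃ i ∈ s, i ≠ j ∧ v (a i) ≤ v (a j) := by
  by_contra! h
  have hlt : v (a j) < v (∑ i ∈ s.erase j, a i) :=
    v.map_lt_sum (v.ne_top_iff.mpr haj) fun i hi => h i (Finset.mem_of_mem_erase hi)
      (Finset.ne_of_mem_erase hi)
  rw [← Finset.add_sum_erase s a hj, add_eq_zero_iff_eq_neg'] at hs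
  rw [hs, map_neg] at hlt
  exact hlt.false

theorem map_coeff_zero_le_of_forall_map_root_le {K : Type*} [Field K] (v : AddValuation K Γ₀)
    {p : K[X]} (hp : p.Splits) {β₀ : K} (hβ₀ : ∀ β ∈ p.roots, v β ≤ v β₀) (k : ℕ) :
    v (p.coeff 0) ≤ v (p.coeff k) + k • v β₀ := by
  classical
  obtain hk | hk := le_or_gt k p.natDegree
  swap
  · simp [coeff_eq_zero_of_natDegree_lt hk]
  rw [hp.coeff_zero_eq_leadingCoeff_mul_prod_roots, coeff_eq_esymm_roots_of_splits hp hk]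
  simp only [map_mul, map_pow, map_neg, map_one, nsmul_zero, zero_add, add_assoc]
  gcongr
  rw [← map_pow, ← map_mul, Multiset.esymm, ← Multiset.sum_map_mul_right]
  refine v.le_map_multiset_sum (Multiset.forall_mem_map_iff.mpr fun T hT => ?_)
  obtain ⟨hTR, hTcard⟩ := Multiset.mem_powersetCard.mp hT
  have hcard : Multiset.card (p.roots - T) = k := by
    rw [Multiset.card_sub hTR, hTcard, ← hp.natDegree_eq_card_roots]; omega
  rw [← add_tsub_cancel_of_le hTR, Multiset.prod_add, map_mul, map_mul, map_pow, ← hcard]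
  gcongr
  exact v.map_multiset_prod_le_card_nsmul fun y hy => hβ₀ y (Multiset.mem_of_le tsub_le_self hy)

open Classical in
noncomputable def ofNeZero {K : Type*} [Field K] (ν : K → ℚ)
    (hmul : ∀ x y : K, x ≠ 0 → y ≠ 0 → ν (x * y) = ν x + ν y)
    (hadd : ∀ x y : K, x ≠ 0 → y ≠ 0 → x + y ≠ 0 → min (ν x) (ν y) ≤ ν (x + y)) :
    AddValuation K (WithTop ℚ) :=
  AddValuation.of (fun x => if x = 0 then ⊤ else (ν x : WithTop ℚ)) (if_pos rfl)
    (by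
      have := hmul 1 1 one_ne_zero one_ne_zero
      simp only [mul_one, left_eq_add] at this
      simp [this])
    (fun x y => by
      by_cases hx : x = 0
      · simp [hx]
      by_cases hy : y = 0
      · simp [hy]
      by_cases hxy : x + y = 0
      · simp [hxy]
      simp only [hx, hy, hxy, if_false, ← WithTop.coe_min, WithTop.coe_le_coe]
      exact hadd x y hx hy hxy)
    (fun x y => by
      by_cases hx : x = 0
      · simp [hx]
      by_cases hy : y = 0
      · simp [hy]
      simp [hx, hy, hmul x y hx hy])

theorem ofNeZero_apply {K : Type*} [Field K] {ν : K → ℚ}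
    {hmul : ∀ x y : K, x ≠ 0 → y ≠ 0 → ν (x * y) = ν x + ν y}
    {hadd : ∀ x y : K, x ≠ 0 → y ≠ 0 → x + y ≠ 0 → min (ν x) (ν y) ≤ ν (x + y)}
    {x : K} (hx : x ≠ 0) : ofNeZero ν hmul hadd x = ν x := by
  simp [ofNeZero, hx]

end AddValuation

theorem neg_le_div_of_coe_le_add_nsmul {a b y : ℚ} {n : ℕ} (hn : 1 < n)
    (h : (b : WithTop ℚ) ≤ a + (n - 1) • (y : WithTop ℚ)) :
    -(y : ℝ) ≤ ((a : ℝ) - b) / ((n : ℝ) - 1) := by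
  have hn' : (1 : ℝ) < n := by exact_mod_cast hn
  rw [← WithTop.coe_nsmul, ← WithTop.coe_add, WithTop.coe_le_coe, nsmul_eq_mul,
    Nat.cast_sub hn.le] at h
  rw [le_div_iff₀ (by linarith)]
  have : (b : ℝ) ≤ a + (n - 1) * y := by exact_mod_cast h
  linarith

theorem div_le_neg_of_coe_add_nsmul_le {a b y : ℚ} {n : ℕ} (hn : 1 < n)
    (h : (a : WithTop ℚ) + n • (y : WithTop ℚ) ≤ b + y) :
    ((a : ℝ) - b) / ((n : ℝ) - 1) ≤ -y := by
  have hn' : (1 : ℝ) < n := by exact_mod_cast hn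
  rw [← WithTop.coe_nsmul, ← WithTop.coe_add, ← WithTop.coe_add, WithTop.coe_le_coe,
    nsmul_eq_mul] at h
  rw [div_le_iff₀ (by linarith)]
  have : (a : ℝ) + n * y ≤ b + y := by exact_mod_cast h
  linarith

theorem Polynomial.mem_roots_divX_iff {R : Type*} [CommRing R] [IsDomain R] {p : R[X]}
    (h0 : p.coeff 0 = 0) (h1 : p.coeff 1 ≠ 0) {x : R} :
    x ∈ p.divX.roots ↔ p.IsRoot x ∧ x ≠ 0 := by
  have hdivX : p.divX.eval 0 ≠ 0 := by rwa [← coeff_zero_eq_eval_zero, coeff_divX]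
  have heval : p.eval x = x * p.divX.eval x := by
    simpa [h0] using congr_arg (eval x) (X_mul_divX_add p).symm
  rw [mem_roots fun h => hdivX (by simp [h]), IsRoot, IsRoot, heval, mul_eq_zero]
  refine ⟨fun hx => ⟨Or.inr hx, ?_⟩, fun ⟨hx, hx0⟩ => hx.resolve_left hx0⟩
  rintro rfl
  exact hdivX hx

theorem Polynomial.mem_roots_map_divX_iff {F K : Type*} [Field F] [Field K] [Algebra F K]
    {f : F[X]} (h0 : f.coeff 0 = 0) (h1 : f.coeff 1 ≠ 0) {β : K} :
    β ∈ (f.map (algebraMap F K)).divX.roots ↔ aeval β f = 0 ∧ β ≠ 0 := by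
  rw [mem_roots_divX_iff (by simp [h0]) (by simpa using h1), IsRoot, eval_map_algebraMap]

theorem Polynomial.exists_nonzero_root_forall_le {F K α : Type*} [Field F] [Field K]
    [IsAlgClosed K] [Algebra F K] [LinearOrder α] (w : K → α) {f : F[X]} (h0 : f.coeff 0 = 0)
    (h1 : f.coeff 1 ≠ 0) (hdeg : 1 < f.natDegree) :
    ∃ β₀ : K, aeval β₀ f = 0 ∧ β₀ ≠ 0 ∧ ∀ β, aeval β f = 0 → β ≠ 0 → w β ≤ w β₀ := by
  classical
  set g := (f.map (algebraMap F K)).divX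
  have hg : g.roots ≠ 0 := (IsAlgClosed.splits g).roots_ne_zero <| by
    rw [natDegree_divX_eq_natDegree_tsub_one, natDegree_map]
    omega
  obtain ⟨β₀, hβ₀, hmax⟩ := g.roots.toFinset.exists_max_image w (Multiset.toFinset_nonempty.mpr hg)
  rw [Multiset.mem_toFinset, mem_roots_map_divX_iff h0 h1] at hβ₀
  exact ⟨β₀, hβ₀.1, hβ₀.2, fun β hβ hβ0 =>
    hmax β (Multiset.mem_toFinset.mpr ((mem_roots_map_divX_iff h0 h1).mpr ⟨hβ, hβ0⟩))⟩

theorem Polynomial.map_coeff_one_le_of_forall_map_root_le {F K Γ₀ : Type*} [Field F] [Field K]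
    [IsAlgClosed K] [Algebra F K] [LinearOrderedAddCommMonoidWithTop Γ₀] (v : AddValuation K Γ₀)
    {f : F[X]} (h0 : f.coeff 0 = 0) (h1 : f.coeff 1 ≠ 0) {β₀ : K}
    (hβ₀ : ∀ β, aeval β f = 0 → β ≠ 0 → v β ≤ v β₀) {n : ℕ} (hn : 1 ≤ n) :
    v (algebraMap F K (f.coeff 1)) ≤ v (algebraMap F K (f.coeff n)) + (n - 1) • v β₀ := by
  have h := v.map_coeff_zero_le_of_forall_map_root_le (IsAlgClosed.splits _)
    (fun β hβ => ((mem_roots_map_divX_iff h0 h1).mp hβ).elim (hβ₀ β)) (n - 1)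
  rwa [coeff_divX, coeff_divX, Nat.sub_add_cancel hn, coeff_map, coeff_map] at h

namespace IsqLin

variable {F : Type*} [Field F] {q : ℕ} {f : F[X]}

theorem coeff_zero_eq_zero (hf : IsqLin q f) (hq : q ≠ 0) : f.coeff 0 = 0 := by
  by_contra h
  obtain ⟨i, hi⟩ := hf 0 h
  exact (pow_ne_zero i hq) hi.symm

theorem exists_map_coeff_add_nsmul_le {K Γ₀ : Type*} [Field K] [Algebra F K]
    [LinearOrderedAddCommMonoidWithTop Γ₀] [Nontrivial Γ₀] (hf : IsqLin q f) (hq : 1 < q)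
    {d : ℕ} (hdeg : f.natDegree ≤ q ^ d) (hf1 : f.coeff 1 ≠ 0) (v : AddValuation K Γ₀) {β : K}
    (hβ : aeval β f = 0) (hβ0 : β ≠ 0) :
    ∃ i, 1 ≤ i ∧ i ≤ d ∧ f.coeff (q ^ i) ≠ 0 ∧
      v (algebraMap F K (f.coeff (q ^ i))) + q ^ i • v β ≤
        v (algebraMap F K (f.coeff 1)) + v β := by
  classical
  rw [aeval_eq_sum_range' (Nat.lt_succ_of_le hdeg)] at hβ
  obtain ⟨n, hn, hn1, hle⟩ := v.exists_ne_map_le_of_sum_eq_zero hβ (j := 1)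
    (Finset.mem_range.mpr (by have := Nat.one_le_pow d q (by omega); omega))
    (by simpa [Algebra.smul_def] using And.intro hf1 hβ0)
  have hfn : f.coeff n ≠ 0 := by
    intro h
    simp [h, v.top_iff, hf1, hβ0] at hle
  obtain ⟨i, rfl⟩ := hf n hfn
  refine ⟨i, Nat.one_le_iff_ne_zero.mpr ?_, ?_, hfn, by simpa [Algebra.smul_def] using hle⟩
  · rintro rfl
    exact hn1 (pow_zero q)
  · exact (Nat.pow_le_pow_iff_right hq).mp (Nat.lt_succ_iff.mp (Finset.mem_range.mp hn))

end IsqLin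

theorem stmt7_general {Fq F : Type*} [Field Fq] [Fintype Fq] [Field F]
    (q : ℕ) (hq : q = Fintype.card Fq)
    (ν : AlgebraicClosure F → ℚ)
    (hmul : ∀ x y : AlgebraicClosure F, x ≠ 0 → y ≠ 0 → ν (x * y) = ν x + ν y)
    (hadd : ∀ x y : AlgebraicClosure F, x ≠ 0 → y ≠ 0 → x + y ≠ 0 →
      min (ν x) (ν y) ≤ ν (x + y))
    (f : Polynomial F) (hf : IsqLin q f) (d : ℕ) (hd : 1 ≤ d)
    (hf0 : f.coeff 1 ≠ 0) (hdeg : f.natDegree = q ^ d) :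
    (∃ β : AlgebraicClosure F, Polynomial.aeval β f = 0 ∧ β ≠ 0) ∧
      IsGreatest
        {y : ℝ | ∃ β : AlgebraicClosure F,
          Polynomial.aeval β f = 0 ∧ β ≠ 0 ∧ y = (ν β : ℝ)}
        (- sInf {y : ℝ | ∃ i : ℕ, 1 ≤ i ∧ i ≤ d ∧ f.coeff (q ^ i) ≠ 0 ∧
          y = ((ν (algebraMap F (AlgebraicClosure F) (f.coeff (q ^ i))) : ℝ) -
                (ν (algebraMap F (AlgebraicClosure F) (f.coeff 1)) : ℝ)) /
              ((q : ℝ) ^ i - 1)}) := by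
  have hq1 : 1 < q := hq ▸ Fintype.one_lt_card
  have hcoeff0 : f.coeff 0 = 0 := hf.coeff_zero_eq_zero (by omega)
  set φ := algebraMap F (AlgebraicClosure F)
  set v := AddValuation.ofNeZero ν hmul hadd
  have hval : ∀ {x}, x ≠ 0 → v x = ν x := AddValuation.ofNeZero_apply
  have hφ : ∀ {a : F}, a ≠ 0 → φ a ≠ 0 := (_root_.map_ne_zero φ).mpr
  obtain ⟨β₀, hβ₀, hβ₀0, hmax⟩ := exists_nonzero_root_forall_le v hcoeff0 hf0
    (hdeg ▸ Nat.one_lt_pow (by omega) hq1)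
  have hlower : ∀ i, 1 ≤ i → f.coeff (q ^ i) ≠ 0 →
      -(ν β₀ : ℝ) ≤ ((ν (φ (f.coeff (q ^ i))) : ℝ) - ν (φ (f.coeff 1))) / ((q : ℝ) ^ i - 1) := by
    intro i hi hfi
    have hqi : 1 < q ^ i := Nat.one_lt_pow (by omega) hq1
    have h := map_coeff_one_le_of_forall_map_root_le v hcoeff0 hf0 hmax hqi.le
    rw [hval (hφ hf0), hval (hφ hfi), hval hβ₀0] at h
    exact_mod_cast neg_le_div_of_coe_le_add_nsmul hqi h
  rw [IsLeast.csInf_eq (a := -(ν β₀ : ℝ)) ⟨?_, ?_⟩, neg_neg]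
  · refine ⟨⟨β₀, hβ₀, hβ₀0⟩, ⟨β₀, hβ₀, hβ₀0, rfl⟩, ?_⟩
    rintro _ ⟨β, hβ, hβ0, rfl⟩
    have h := hmax β hβ hβ0
    rw [hval hβ0, hval hβ₀0, WithTop.coe_le_coe] at h
    exact_mod_cast h
  · obtain ⟨i, hi, hid, hfi, h⟩ := hf.exists_map_coeff_add_nsmul_le hq1 hdeg.le hf0 v hβ₀ hβ₀0
    have hqi : 1 < q ^ i := Nat.one_lt_pow (by omega) hq1
    rw [hval (hφ hf0), hval (hφ hfi), hval hβ₀0] at h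
    have hupper := div_le_neg_of_coe_add_nsmul_le hqi h
    push_cast at hupper
    exact ⟨i, hi, hid, hfi, le_antisymm (hlower i hi hfi) hupper⟩
  · rintro _ ⟨i, hi, -, hfi, rfl⟩
    exact hlower i hi hfi

theorem stmt7 {Fq F : Type*} [Field Fq] [Fintype Fq] [Field F] [Algebra Fq F]
    (q : ℕ) (hq : q = Fintype.card Fq)
    (ν : AlgebraicClosure F → ℚ)
    (hmul : ∀ x y : AlgebraicClosure F, x ≠ 0 → y ≠ 0 → ν (x * y) = ν x + ν y)
    (hadd : ∀ x y : AlgebraicClosure F, x ≠ 0 → y ≠ 0 → x + y ≠ 0 →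
      min (ν x) (ν y) ≤ ν (x + y))
    (f : Polynomial F) (hf : IsqLin q f) (d : ℕ) (hd : 1 ≤ d)
    (hf0 : f.coeff 1 ≠ 0) (hfd : f.coeff (q ^ d) ≠ 0) (hdeg : f.natDegree = q ^ d) :
    (∃ β : AlgebraicClosure F, Polynomial.aeval β f = 0 ∧ β ≠ 0) ∧
      IsGreatest
        {y : ℝ | ∃ β : AlgebraicClosure F,
          Polynomial.aeval β f = 0 ∧ β ≠ 0 ∧ y = (ν β : ℝ)}
        (- sInf {y : ℝ | ∃ i : ℕ, 1 ≤ i ∧ i ≤ d ∧ f.coeff (q ^ i) ≠ 0 ∧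
          y = ((ν (algebraMap F (AlgebraicClosure F) (f.coeff (q ^ i))) : ℝ) -
                (ν (algebraMap F (AlgebraicClosure F) (f.coeff 1)) : ℝ)) /
              ((q : ℝ) ^ i - 1)}) :=
  stmt7_general q hq ν hmul hadd f hf d hd hf0 hdeg
end

section
/- Let d, f ∈ F[X] be nonzero q-linearized polynomials whose coefficients of X are nonzero (hence both are separable). Then there exists a q-linearized polynomial g ∈ F[X] with f = g ∘ d (polynomial composition) if and only if every root of d in F̄ is a root of f, i.e., ker(d) ⊆ ker(f). -/
/-!
Right division by `d` works as for ordinary polynomials: the leading term `c X^(qⁿ)` of `f` is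
cancelled by `c d^(q^(n-k))`, which is again `q`-linearized because `d ↦ d^q` is the Frobenius
twist of the coefficients followed by `X ↦ X^q`. So `f = g ∘ d + r` with `deg r < deg d`, and
`r` vanishes on `ker d` whenever `f` does, as the linearized `g` has no constant term. Since
`d' = d₁ ≠ 0`, `d` is separable and `ker d` has `deg d` elements, which forces `r = 0`.
-/

open Polynomial

namespace IsqLin

variable {F : Type*} [Field F] {q : ℕ}

variable (F q) in
def submodule : Submodule F F[X] where
  carrier := {f | IsqLin q f}
  zero_mem' n hn := absurd (Polynomial.coeff_zero n) hn
  add_mem' {f g} hf hg n hn := by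
    by_cases hfn : f.coeff n = 0
    · exact hg n (by simpa [hfn] using hn)
    · exact hf n hfn
  smul_mem' c f hf n hn := hf n (right_ne_zero_of_mul (by simpa using hn))

lemma zero : IsqLin q (0 : F[X]) := (submodule F q).zero_mem

lemma add {f g : F[X]} (hf : IsqLin q f) (hg : IsqLin q g) : IsqLin q (f + g) :=
  (submodule F q).add_mem hf hg

lemma sub {f g : F[X]} (hf : IsqLin q f) (hg : IsqLin q g) : IsqLin q (f - g) :=
  (submodule F q).sub_mem hf hg

lemma C_mul {f : F[X]} (c : F) (hf : IsqLin q f) : IsqLin q (C c * f) := by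
  rw [← smul_eq_C_mul]
  exact (submodule F q).smul_mem c hf

lemma X_pow (j : ℕ) : IsqLin q (X ^ q ^ j : F[X]) := fun n hn =>
  ⟨j, by by_contra h; exact hn (by simp [coeff_X_pow, h])⟩

lemma coeff_zero (hq : q ≠ 0) {f : F[X]} (hf : IsqLin q f) : f.coeff 0 = 0 := by
  by_contra h
  obtain ⟨i, hi⟩ := hf 0 h
  exact pow_ne_zero i hq hi.symm

lemma aeval_comp_eq_zero {A : Type*} [CommRing A] [Algebra F A] (hq : q ≠ 0) {g d : F[X]}
    (hg : IsqLin q g) {β : A} (hβ : aeval β d = 0) : aeval β (g.comp d) = 0 := by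
  rw [aeval_comp, hβ, ← coeff_zero_eq_aeval_zero', hg.coeff_zero hq, map_zero]

lemma exists_natDegree_eq {f : F[X]} (hf : IsqLin q f) (hf0 : f ≠ 0) :
    ∃ n, f.natDegree = q ^ n :=
  hf _ (leadingCoeff_ne_zero.mpr hf0)

lemma map {K : Type*} [Field K] (φ : F →+* K) {f : F[X]} (hf : IsqLin q f) :
    IsqLin q (f.map φ) := fun n hn =>
  hf n fun h => hn (by rw [coeff_map, h, map_zero])

lemma expand (hq : 0 < q) (j : ℕ) {f : F[X]} (hf : IsqLin q f) :
    IsqLin q (Polynomial.expand F (q ^ j) f) := by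
  intro n hn
  rw [coeff_expand (pow_pos hq j)] at hn
  split_ifs at hn with hdvd
  · obtain ⟨i, hi⟩ := hf _ hn
    exact ⟨i + j, by rw [← Nat.div_mul_cancel hdvd, hi, pow_add]⟩
  · exact absurd rfl hn

lemma derivative_eq (hq : (q : F) = 0) {f : F[X]} (hf : IsqLin q f) :
    derivative f = C (f.coeff 1) := by
  ext m
  rw [coeff_derivative, coeff_C]
  rcases m with _ | m
  · simp
  rw [if_neg m.succ_ne_zero]
  by_cases hcoeff : f.coeff (m + 1 + 1) = 0
  · rw [hcoeff, zero_mul]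
  obtain ⟨i, hi⟩ := hf _ hcoeff
  have hi0 : i ≠ 0 := by rintro rfl; simp at hi
  have : ((m + 1 : ℕ) : F) + 1 = 0 := by
    rw [← Nat.cast_succ, Nat.succ_eq_add_one, hi, Nat.cast_pow, hq, zero_pow hi0]
  exact mul_eq_zero_of_right _ this

lemma separable (hq : (q : F) = 0) {f : F[X]} (hf : IsqLin q f) (hf1 : f.coeff 1 ≠ 0) :
    f.Separable :=
  (separable_def' f).mpr ⟨0, C (f.coeff 1)⁻¹, by
    rw [hf.derivative_eq hq, zero_mul, zero_add, ← Polynomial.C_mul, inv_mul_cancel₀ hf1, C_1]⟩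

lemma exists_degree_sub_comp_lt (hq : 1 < q) {d f : F[X]}
    (hd : IsqLin q d) (hf : IsqLin q f) (hd0 : d ≠ 0) (hdf : d.degree ≤ f.degree) :
    ∃ t : F[X], IsqLin q t ∧ (f - t.comp d).degree < f.degree := by
  have hf0 : f ≠ 0 := fun h => hd0 (degree_eq_bot.mp (by simpa [h] using hdf))
  obtain ⟨k, hk⟩ := hd.exists_natDegree_eq hd0
  obtain ⟨n, hn⟩ := hf.exists_natDegree_eq hf0
  have hkn : k ≤ n :=
    (Nat.pow_le_pow_iff_right hq).mp (hk ▸ hn ▸ natDegree_le_natDegree hdf)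
  set c := f.leadingCoeff / d.leadingCoeff ^ q ^ (n - k)
  have hc0 : c ≠ 0 := div_ne_zero (leadingCoeff_ne_zero.mpr hf0)
    (pow_ne_zero _ (leadingCoeff_ne_zero.mpr hd0))
  have hcomp : (C c * X ^ q ^ (n - k)).comp d = C c * d ^ q ^ (n - k) := by
    rw [mul_comp, C_comp, X_pow_comp]
  refine ⟨C c * X ^ q ^ (n - k), (X_pow _).C_mul c, hcomp ▸ degree_sub_lt_left ?_ hf0 ?_⟩
  · rw [degree_C_mul hc0, degree_pow, degree_eq_natDegree hd0, degree_eq_natDegree hf0, hk, hn,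
      nsmul_eq_mul, ← Nat.cast_mul, ← pow_add, Nat.sub_add_cancel hkn]
  · rw [leadingCoeff_mul, leadingCoeff_C, leadingCoeff_pow,
      div_mul_cancel₀ _ (pow_ne_zero _ (leadingCoeff_ne_zero.mpr hd0))]

section ExpChar

variable {p e : ℕ} [ExpChar F p]

lemma pow_pow (hqe : q = p ^ e) (j : ℕ) {f : F[X]} (hf : IsqLin q f) : IsqLin q (f ^ q ^ j) := by
  have hpow : q ^ j = p ^ (e * j) := by rw [hqe, pow_mul]
  rw [hpow, ← map_iterateFrobenius_expand, ← hpow]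
  exact (hf.expand (hqe ▸ pow_pos (expChar_pos F p) e) j).map _

lemma comp (hqe : q = p ^ e) {g d : F[X]} (hg : IsqLin q g) (hd : IsqLin q d) :
    IsqLin q (g.comp d) := by
  rw [comp_eq_sum_left]
  refine (submodule F q).sum_mem fun n hn => ?_
  obtain ⟨j, rfl⟩ := hg n (mem_support_iff.mp hn)
  exact (hd.pow_pow hqe j).C_mul _

lemma exists_eq_comp_add (hq : 1 < q) (hqe : q = p ^ e) {d f : F[X]}
    (hd : IsqLin q d) (hf : IsqLin q f) (hd0 : d ≠ 0) :
    ∃ g r : F[X], IsqLin q g ∧ f = g.comp d + r ∧ r.degree < d.degree := by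
  induction hdeg : f.degree using WellFoundedLT.induction generalizing f with
  | ind m ih =>
  by_cases hlt : f.degree < d.degree
  · exact ⟨0, f, zero, by simp, hlt⟩
  obtain ⟨t, ht, hdeg_lt⟩ := exists_degree_sub_comp_lt hq hd hf hd0 (not_lt.mp hlt)
  obtain ⟨g, r, hg, heq, hrd⟩ := ih _ (hdeg ▸ hdeg_lt) (hf.sub (ht.comp hqe hd)) rfl
  refine ⟨t + g, r, ht.add hg, ?_, hrd⟩
  rw [add_comp, add_assoc, ← heq, add_sub_cancel]

end ExpChar

end IsqLin

lemma Polynomial.Separable.natDegree_le_of_forall_aeval_eq_zero {F K : Type*} [Field F] [Field K]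
    [Algebra F K] {d r : F[X]} (hd : d.Separable) (hsplit : (d.map (algebraMap F K)).Splits)
    (hr : r ≠ 0) (hroots : ∀ β : K, aeval β d = 0 → aeval β r = 0) :
    d.natDegree ≤ r.natDegree := by
  have hsub : d.rootSet K ⊆ r.rootSet K := fun β hβ =>
    mem_rootSet.mpr ⟨hr, hroots β (mem_rootSet.mp hβ).2⟩
  calc d.natDegree = (d.rootSet K).ncard := by
        rw [← card_rootSet_eq_natDegree hd hsplit, ← Nat.card_eq_fintype_card,
          Nat.card_coe_set_eq]
    _ ≤ (r.rootSet K).ncard := Set.ncard_le_ncard hsub (rootSet_finite r K)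
    _ ≤ r.natDegree := ncard_rootSet_le r K

theorem stmt11_general {Fq F : Type*} [Field Fq] [Fintype Fq] [Field F] [Algebra Fq F]
    (q : ℕ) (hq : q = Fintype.card Fq)
    (d f : Polynomial F) (hd : IsqLin q d) (hf : IsqLin q f)
    (hd1 : d.coeff 1 ≠ 0) :
    (∃ g : Polynomial F, IsqLin q g ∧ f = g.comp d) ↔
      (∀ β : AlgebraicClosure F, Polynomial.aeval β d = 0 → Polynomial.aeval β f = 0) := by
  have hq1 : 1 < q := hq ▸ Fintype.one_lt_card
  have hqF : (q : F) = 0 := by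
    rw [hq, ← map_natCast (algebraMap Fq F), FiniteField.cast_card_eq_zero, map_zero]
  obtain ⟨e, hp, hqe⟩ := FiniteField.card Fq (ringChar Fq)
  have : Fact (ringChar Fq).Prime := ⟨hp⟩
  have : CharP F (ringChar Fq) := charP_of_injective_algebraMap (algebraMap Fq F).injective _
  constructor
  · rintro ⟨g, hg, rfl⟩ β hβ
    exact hg.aeval_comp_eq_zero (by omega) hβ
  · intro hroots
    have hd0 : d ≠ 0 := fun h => hd1 (by simp [h])
    obtain ⟨g, r, hg, rfl, hrd⟩ := hd.exists_eq_comp_add hq1 (hq.trans hqe) hf hd0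
    refine ⟨g, hg, ?_⟩
    suffices hr : r = 0 by rw [hr, add_zero]
    by_contra hr
    have hr_roots (β : AlgebraicClosure F) (hβ : aeval β d = 0) : aeval β r = 0 := by
      simpa [hg.aeval_comp_eq_zero (by omega) hβ] using hroots β hβ
    exact (natDegree_lt_natDegree hr hrd).not_ge <|
      (hd.separable hqF hd1).natDegree_le_of_forall_aeval_eq_zero (IsAlgClosed.splits _) hr
        hr_roots

theorem stmt11 {Fq F : Type*} [Field Fq] [Fintype Fq] [Field F] [Algebra Fq F]
    (q : ℕ) (hq : q = Fintype.card Fq)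
    (d f : Polynomial F) (hd : IsqLin q d) (hf : IsqLin q f)
    (hd0 : d ≠ 0) (hf0 : f ≠ 0)
    (hd1 : d.coeff 1 ≠ 0) (hf1 : f.coeff 1 ≠ 0) :
    (∃ g : Polynomial F, IsqLin q g ∧ f = g.comp d) ↔
      (∀ β : AlgebraicClosure F, Polynomial.aeval β d = 0 → Polynomial.aeval β f = 0) :=
  stmt11_general q hq d f hd hf hd1
end
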